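/- arXiv:1801.03056 — 2 statements merged into one kernel-verified Lean document; each statement's English description precedes it below -/
import Mathlib

section
/- Let G = GL_n(ℤ_p) for p an odd prime, and let H be the kernel of the reduction map π : GL_n(ℤ_p) → GL_n(ℤ/pℤ). Then for all i ≥ 1, H^{p^i} = ker(GL_n(ℤ_p) → GL_n(ℤ/p^{i+1}ℤ)), where H^{p^i} denotes the closed subgroup of H generated by p^i-th powers. -/
open Matrix

/-- Reduction `GL_n(ℤ_p) → GL_n(ℤ/p^kℤ)`. -/
noncomputable def glRed (p : ℕ) [Fact p.Prime] (n k : ℕ) :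
    GL (Fin n) ℤ_[p] →* GL (Fin n) (ZMod (p ^ k)) :=
  Matrix.GeneralLinearGroup.map (PadicInt.toZModPow k)

/-!
For `j ≥ 1` and `p` odd, the binomial theorem gives
`(1 + p ^ j Y) ^ p ^ i ≡ 1 + p ^ (i + j) Y  (mod p ^ (i + j + 1))`: the term of index `m ≥ 2` has
valuation at least `i - v_p(m) + j m`, and `v_p(m) + 2 ≤ m` for odd `p`. With `j = 1` this puts the
`p ^ i`-th powers of the level-`1` kernel into the level-`(i + 1)` kernel, which is closed. Conversely,
reading the congruence backwards, every element of the level-`(i + j)` kernel agrees with a `p ^ i`-th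
power modulo `p ^ (i + j + 1)`; correcting one level at a time approximates any element of the
level-`(i + 1)` kernel by products of `p ^ i`-th powers, and the kernels form a basis of
neighbourhoods of `1`.
-/

open Finset Filter Topology

theorem Nat.factorization_add_two_le {p m : ℕ} (hp : p.Prime) (hodd : p ≠ 2) (hm : 2 ≤ m) :
    m.factorization p + 2 ≤ m := by
  have hle : p ^ m.factorization p ≤ m := Nat.ordProj_le p (by omega)
  cases hw : m.factorization p with
  | zero => omega
  | succ w =>
    have hp3 : 3 ≤ p := by have := hp.two_le; omega
    have hw' : w < p ^ w := Nat.lt_pow_self hp.one_lt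
    rw [hw, pow_succ] at hle
    nlinarith

theorem Nat.Prime.pow_dvd_choose_pow_mul_pow {p i j m : ℕ} (hp : p.Prime) (hodd : p ≠ 2)
    (hj : 1 ≤ j) (hm : 2 ≤ m) : p ^ (i + j + 1) ∣ (p ^ i).choose m * p ^ (j * m) := by
  rcases lt_or_ge (p ^ i) m with hmi | hmi
  · simp [Nat.choose_eq_zero_of_lt hmi]
  have hC : (p ^ i).choose m ≠ 0 := (Nat.choose_pos hmi).ne'
  have hpi : 1 ≤ p ^ i := Nat.one_le_pow _ _ hp.pos
  have hdvd : p ^ i ∣ (p ^ i).choose m * m := by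
    have := Nat.add_one_mul_choose_eq (p ^ i - 1) (m - 1)
    rw [Nat.sub_add_cancel hpi, Nat.sub_add_cancel (by omega : 1 ≤ m)] at this
    exact ⟨_, this.symm⟩
  rw [hp.pow_dvd_iff_le_factorization (mul_ne_zero hC (by omega)), Nat.factorization_mul hC
    (by omega)] at hdvd
  rw [hp.pow_dvd_iff_le_factorization (mul_ne_zero hC (pow_ne_zero _ hp.ne_zero)),
    Nat.factorization_mul hC (pow_ne_zero _ hp.ne_zero)]
  simp only [Finsupp.add_apply, Nat.factorization_pow, Finsupp.smul_apply, smul_eq_mul,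
    hp.factorization_self] at hdvd ⊢
  have := Nat.factorization_add_two_le hp hodd hm
  nlinarith

theorem pow_dvd_one_add_pow_prime_pow_sub {A : Type*} [Ring A] {p i j : ℕ} (hp : p.Prime)
    (hodd : p ≠ 2) (hj : 1 ≤ j) (y : A) :
    (p : A) ^ (i + j + 1) ∣ (1 + (p : A) ^ j * y) ^ p ^ i - 1 - (p : A) ^ (i + j) * y := by
  have hN : 1 ≤ p ^ i := Nat.one_le_pow _ _ hp.pos
  set f : ℕ → A := fun m => (((p ^ i).choose m * p ^ (j * m) : ℕ) : A) * y ^ m with hf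
  have hexp : (1 + (p : A) ^ j * y) ^ p ^ i = ∑ m ∈ range (p ^ i + 1), f m := by
    rw [add_comm, (Commute.one_right _).add_pow]
    refine sum_congr rfl fun m _ => ?_
    rw [one_pow, mul_one, ((Nat.cast_commute _ _).pow_left _).mul_pow, ← pow_mul, hf]
    push_cast
    rw [← (Nat.cast_commute _ _).eq, mul_assoc]
  rw [hexp, range_eq_Ico, sum_eq_sum_Ico_succ_bot (by omega), sum_eq_sum_Ico_succ_bot (by omega)]
  have h0 : f 0 = 1 := by simp [hf]
  have h1 : f 1 = (p : A) ^ (i + j) * y := by simp [hf, pow_add]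
  rw [h0, h1, add_sub_cancel_left, add_sub_cancel_left]
  refine dvd_sum fun m hm => ?_
  rw [mem_Ico] at hm
  have := Nat.cast_dvd_cast (α := A) (hp.pow_dvd_choose_pow_mul_pow (i := i) hodd hj hm.1)
  rw [Nat.cast_pow] at this
  exact this.mul_right _

theorem Matrix.natCast_dvd_iff {R ι : Type*} [Semiring R] [Fintype ι] [DecidableEq ι] (d : ℕ)
    (X : Matrix ι ι R) : (d : Matrix ι ι R) ∣ X ↔ ∀ a b, (d : R) ∣ X a b := by
  constructor
  · rintro ⟨Y, rfl⟩ a b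
    exact ⟨Y a b, by rw [← nsmul_eq_mul, smul_apply, nsmul_eq_mul]⟩
  · intro h
    choose Y hY using h
    exact ⟨Matrix.of Y, by ext a b; rw [← nsmul_eq_mul, smul_apply, nsmul_eq_mul, hY, of_apply]⟩

theorem Matrix.isUnit_one_add_of_forall_mem_maximalIdeal {R ι : Type*} [CommRing R]
    [IsLocalRing R] [Fintype ι] [DecidableEq ι] {Z : Matrix ι ι R}
    (hZ : ∀ a b, Z a b ∈ IsLocalRing.maximalIdeal R) : IsUnit (1 + Z) := by
  have hZ0 : (IsLocalRing.residue R).mapMatrix Z = 0 := by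
    ext a b
    exact (IsLocalRing.residue_eq_zero_iff _).mpr (hZ a b)
  rw [isUnit_iff_isUnit_det, ← IsLocalRing.residue_ne_zero_iff_isUnit, RingHom.map_det, map_add,
    map_one, hZ0, add_zero, det_one]
  exact one_ne_zero

theorem isClosed_setOf_dvd {R : Type*} [Semiring R] [TopologicalSpace R] [ContinuousMul R]
    [CompactSpace R] [T2Space R] (a : R) : IsClosed {x : R | a ∣ x} := by
  have : {x : R | a ∣ x} = Set.range (a * ·) := by
    ext x
    exact ⟨fun ⟨c, hc⟩ => ⟨c, hc.symm⟩, fun ⟨c, hc⟩ => ⟨c, hc.symm⟩⟩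
  rw [this]
  exact (isCompact_range (continuous_const.mul continuous_id)).isClosed

theorem PadicInt.tendsto_zero_of_forall_pow_dvd {p : ℕ} [Fact p.Prime] {x : ℕ → ℤ_[p]}
    (h : ∀ m, (p : ℤ_[p]) ^ m ∣ x m) : Tendsto x atTop (𝓝 0) := by
  refine squeeze_zero_norm (fun m => ?_) (tendsto_pow_atTop_nhds_zero_of_lt_one (norm_nonneg _)
    (PadicInt.mem_nonunits.mp PadicInt.p_nonunit : ‖(p : ℤ_[p])‖ < 1))
  obtain ⟨y, hy⟩ := h m
  rw [hy, norm_mul, norm_pow]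
  exact mul_le_of_le_one_right (by positivity) (PadicInt.norm_le_one y)

section glRed

variable {p : ℕ} [Fact p.Prime] {n : ℕ}

theorem glRed_eq_glRed_iff (k : ℕ) (a b : GL (Fin n) ℤ_[p]) :
    glRed p n k a = glRed p n k b ↔
      (p : Matrix (Fin n) (Fin n) ℤ_[p]) ^ k ∣ (a : Matrix (Fin n) (Fin n) ℤ_[p]) - b := by
  rw [Units.ext_iff, ← Nat.cast_pow, natCast_dvd_iff, ← Matrix.ext_iff]
  refine forall₂_congr fun i j => ?_
  rw [Matrix.sub_apply, Nat.cast_pow, ← Ideal.mem_span_singleton, ← PadicInt.ker_toZModPow,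
    RingHom.sub_mem_ker_iff]
  rfl

theorem mem_ker_glRed_iff (k : ℕ) (g : GL (Fin n) ℤ_[p]) :
    g ∈ (glRed p n k).ker ↔
      (p : Matrix (Fin n) (Fin n) ℤ_[p]) ^ k ∣ (g : Matrix (Fin n) (Fin n) ℤ_[p]) - 1 := by
  rw [MonoidHom.mem_ker, ← map_one (glRed p n k), glRed_eq_glRed_iff, Units.val_one]

theorem ker_glRed_antitone : Antitone fun k => (glRed p n k).ker := fun a b hab g hg => by
  simp only [mem_ker_glRed_iff] at hg ⊢
  exact (pow_dvd_pow _ hab).trans hg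

theorem isClosed_ker_glRed (k : ℕ) : IsClosed ((glRed p n k).ker : Set (GL (Fin n) ℤ_[p])) := by
  have hker : ((glRed p n k).ker : Set (GL (Fin n) ℤ_[p])) =
      (fun g : GL (Fin n) ℤ_[p] => (g : Matrix (Fin n) (Fin n) ℤ_[p]) - 1) ⁻¹'
        {X | (p : Matrix (Fin n) (Fin n) ℤ_[p]) ^ k ∣ X} := by
    ext g
    exact mem_ker_glRed_iff k g
  have : CompactSpace (Matrix (Fin n) (Fin n) ℤ_[p]) :=
    inferInstanceAs (CompactSpace (Fin n → Fin n → ℤ_[p]))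
  rw [hker]
  exact (isClosed_setOf_dvd _).preimage (Units.continuous_val.sub continuous_const)

theorem tendsto_val_of_mem_ker_glRed {u : ℕ → GL (Fin n) ℤ_[p]}
    (hu : ∀ m, u m ∈ (glRed p n m).ker) :
    Tendsto (fun m => (u m : Matrix (Fin n) (Fin n) ℤ_[p])) atTop (𝓝 1) := by
  refine tendsto_pi_nhds.mpr fun a => tendsto_pi_nhds.mpr fun b => ?_
  rw [← tendsto_sub_nhds_zero_iff]
  refine PadicInt.tendsto_zero_of_forall_pow_dvd fun m => ?_
  have := (mem_ker_glRed_iff m (u m)).mp (hu m)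
  rw [← Nat.cast_pow, natCast_dvd_iff] at this
  simpa using this a b

theorem tendsto_one_of_mem_ker_glRed {u : ℕ → GL (Fin n) ℤ_[p]}
    (hu : ∀ m, u m ∈ (glRed p n m).ker) : Tendsto u atTop (𝓝 1) := by
  rw [Units.isEmbedding_embedProduct.tendsto_nhds_iff]
  exact (tendsto_val_of_mem_ker_glRed hu).prodMk_nhds
    ((MulOpposite.continuous_op.tendsto _).comp
      (tendsto_val_of_mem_ker_glRed fun m => inv_mem (hu m)))

theorem mem_topologicalClosure_of_forall_inv_mul_mem_ker_glRed (S : Subgroup (GL (Fin n) ℤ_[p]))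
    {g : GL (Fin n) ℤ_[p]} (h : ∀ m, ∃ s ∈ S, s⁻¹ * g ∈ (glRed p n m).ker) :
    g ∈ S.topologicalClosure := by
  choose s hs hsg using h
  have hlim : Tendsto s atTop (𝓝 g) := by
    have := tendsto_const_nhds (x := g) |>.mul (tendsto_one_of_mem_ker_glRed hsg).inv
    simpa using this
  rw [← SetLike.mem_coe, Subgroup.topologicalClosure_coe]
  exact mem_closure_of_tendsto hlim (Eventually.of_forall hs)

theorem pow_prime_pow_mem_ker_glRed (hodd : p ≠ 2) (i : ℕ) {h : GL (Fin n) ℤ_[p]}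
    (hh : h ∈ (glRed p n 1).ker) : h ^ p ^ i ∈ (glRed p n (i + 1)).ker := by
  obtain ⟨Y, hY⟩ := (mem_ker_glRed_iff 1 h).mp hh
  have key := pow_dvd_one_add_pow_prime_pow_sub (i := i) Fact.out hodd le_rfl Y
  rw [mem_ker_glRed_iff, Units.val_pow_eq_pow_val, eq_add_of_sub_eq' hY,
    ← sub_add_cancel (_ - 1) ((p : Matrix (Fin n) (Fin n) ℤ_[p]) ^ (i + 1) * Y)]
  exact ((pow_dvd_pow _ (Nat.le_succ _)).trans key).add (dvd_mul_right _ _)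

theorem exists_pow_prime_pow_eq_glRed (hodd : p ≠ 2) {i j : ℕ} (hj : 1 ≤ j)
    {g : GL (Fin n) ℤ_[p]} (hg : g ∈ (glRed p n (i + j)).ker) :
    ∃ h ∈ (glRed p n 1).ker, glRed p n (i + j + 1) (h ^ p ^ i) = glRed p n (i + j + 1) g := by
  obtain ⟨Y, hY⟩ := (mem_ker_glRed_iff _ g).mp hg
  set X : Matrix (Fin n) (Fin n) ℤ_[p] := (p : Matrix (Fin n) (Fin n) ℤ_[p]) ^ j * Y
  have hpX : (p : Matrix (Fin n) (Fin n) ℤ_[p]) ∣ X := (dvd_pow_self _ (by omega)).mul_right _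
  have hunit : IsUnit (1 + X) := by
    refine isUnit_one_add_of_forall_mem_maximalIdeal fun a b => ?_
    rw [PadicInt.maximalIdeal_eq_span_p, Ideal.mem_span_singleton]
    exact (natCast_dvd_iff p X).mp hpX a b
  refine ⟨hunit.unit, ?_, ?_⟩
  · rwa [mem_ker_glRed_iff, IsUnit.unit_spec, add_sub_cancel_left, pow_one]
  · have key := pow_dvd_one_add_pow_prime_pow_sub (i := i) Fact.out hodd hj Y
    rwa [glRed_eq_glRed_iff, Units.val_pow_eq_pow_val, IsUnit.unit_spec, eq_add_of_sub_eq' hY,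
      sub_add_eq_sub_sub]

theorem topologicalClosure_closure_pow_prime_pow_le_ker_glRed (hodd : p ≠ 2) (i : ℕ) :
    (Subgroup.closure {x : GL (Fin n) ℤ_[p] | ∃ h ∈ (glRed p n 1).ker, x = h ^ p ^ i}
      ).topologicalClosure ≤ (glRed p n (i + 1)).ker :=
  Subgroup.topologicalClosure_minimal _
    (Subgroup.closure_le _ |>.mpr <| by
      rintro _ ⟨h, hh, rfl⟩
      exact pow_prime_pow_mem_ker_glRed hodd i hh)
    (isClosed_ker_glRed _)

theorem ker_glRed_le_topologicalClosure_closure_pow_prime_pow (hodd : p ≠ 2) (i : ℕ) :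
    (glRed p n (i + 1)).ker ≤ (Subgroup.closure
      {x : GL (Fin n) ℤ_[p] | ∃ h ∈ (glRed p n 1).ker, x = h ^ p ^ i}).topologicalClosure := by
  intro g hg
  set S := Subgroup.closure {x : GL (Fin n) ℤ_[p] | ∃ h ∈ (glRed p n 1).ker, x = h ^ p ^ i}
  have approx : ∀ m, ∃ s ∈ S, s⁻¹ * g ∈ (glRed p n (i + (m + 1))).ker := by
    intro m
    induction m with
    | zero => exact ⟨1, one_mem S, by rwa [inv_one, one_mul]⟩
    | succ m ih =>
      obtain ⟨s, hs, hsg⟩ := ih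
      obtain ⟨h, hh, hpow⟩ := exists_pow_prime_pow_eq_glRed hodd m.succ_pos hsg
      refine ⟨s * h ^ p ^ i, mul_mem hs (Subgroup.subset_closure ⟨h, hh, rfl⟩), ?_⟩
      rw [_root_.mul_inv_rev, mul_assoc]
      exact (MonoidHom.eq_iff _).mp hpow.symm
  refine mem_topologicalClosure_of_forall_inv_mul_mem_ker_glRed S fun m => ?_
  obtain ⟨s, hs, hsg⟩ := approx m
  exact ⟨s, hs, ker_glRed_antitone (by omega : m ≤ i + (m + 1)) hsg⟩

end glRed

theorem stmt1_general (p : ℕ) [Fact p.Prime] (hodd : p ≠ 2) (n : ℕ)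
    (H : Subgroup (GL (Fin n) ℤ_[p])) (hH : H = (glRed p n 1).ker) :
    ∀ i : ℕ, 1 ≤ i →
      (Subgroup.closure {x : GL (Fin n) ℤ_[p] | ∃ h ∈ H, x = h ^ p ^ i}).topologicalClosure
        = (glRed p n (i + 1)).ker := by
  subst hH
  intro i _
  exact le_antisymm (topologicalClosure_closure_pow_prime_pow_le_ker_glRed hodd i)
    (ker_glRed_le_topologicalClosure_closure_pow_prime_pow hodd i)

/-- for `p` an odd prime and `H = ker(GL_n(ℤ_p) → GL_n(ℤ/pℤ))`, the closed
subgroup of `H` generated by `p^i`-th powers equals `ker(GL_n(ℤ_p) → GL_n(ℤ/p^{i+1}ℤ))`. -/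
theorem stmt1 (p : ℕ) [Fact p.Prime] (hodd : p ≠ 2) (n : ℕ) (hn : 1 ≤ n)
    (H : Subgroup (GL (Fin n) ℤ_[p])) (hH : H = (glRed p n 1).ker) :
    ∀ i : ℕ, 1 ≤ i →
      (Subgroup.closure {x : GL (Fin n) ℤ_[p] | ∃ h ∈ H, x = h ^ p ^ i}).topologicalClosure
        = (glRed p n (i + 1)).ker :=
  stmt1_general p hodd n H hH
end

section
/- Let G be a profinite group with a descending chain of open normal subgroups G(0) ≥ G(1) ≥ ⋯ such that the p-th power map induces isomorphisms G(i)/G(i+1) → G(i+1)/G(i+2) with each quotient isomorphic to (ℤ/pℤ)^d. Let Γ be a closed subgroup of G and set Γ(i) = G(i) ∩ Γ. Then for all sufficiently large i, the p-th power map induces an injective group homomorphism Γ(i)/Γ(i+1) → Γ(i+1)/Γ(i+2), and these injections are isomorphisms for i sufficiently large. -/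
/-!
Put `Γ(i) = G(i) ∩ Γ`. Since `G(i+2)` is normal, the congruence `(ac)^p ≡ a^p c^p` shows that
for `a, b ∈ G(i)` one has `a⁻¹b ∈ G(i+1)` iff `(a^p)⁻¹b^p ∈ G(i+2)`; the same then holds in `Γ`,
so the `p`-th power map induces injections `Γ(i)/Γ(i+1) ↪ Γ(i+1)/Γ(i+2)` for every `i`.
These subquotients embed into `G(i)/G(i+1) ≅ (ℤ/pℤ)^d`, so their orders form a nondecreasing
sequence bounded by `p^d`. It is eventually constant, and from then on the injections are
bijections.
-/

open Filter

theorem eventually_surjective_of_injective_of_card_le {α : ℕ → Type*} [∀ i, Finite (α i)]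
    (f : ∀ i, α i → α (i + 1)) (hf : ∀ i, Function.Injective (f i)) (B : ℕ)
    (hB : ∀ i, Nat.card (α i) ≤ B) : ∀ᶠ i in atTop, Function.Surjective (f i) := by
  have hmono : ∀ i, Nat.card (α i) ≤ Nat.card (α (i + 1)) := fun i =>
    Nat.card_le_card_of_injective (f i) (hf i)
  -- `B - #α i` is an antitone sequence in `ℕ`, hence eventually constant.
  obtain ⟨N, hN⟩ := WellFoundedLT.antitone_chain_condition (f := fun i => B - Nat.card (α i))
    (antitone_nat_of_succ_le fun i => by have := hmono i; omega)
  filter_upwards [eventually_ge_atTop N] with i hi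
  have hcard : Nat.card (α i) = Nat.card (α (i + 1)) := by
    have := hN i hi; have := hN (i + 1) (by omega); have := hB i; have := hB (i + 1); omega
  exact ((Nat.bijective_iff_injective_and_card (f i)).2 ⟨hf i, hcard⟩).2

namespace Subgroup

variable {G : Type*} [Group G]

theorem relIndex_inf_inf_le {H K : Subgroup G} (L : Subgroup G) (hHK : H.relIndex K ≠ 0) :
    (H ⊓ L).relIndex (K ⊓ L) ≤ H.relIndex K :=
  calc (H ⊓ L).relIndex (K ⊓ L)
      ≤ H.relIndex (K ⊓ L) * L.relIndex (K ⊓ L) := relIndex_inf_le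
    _ = H.relIndex (K ⊓ L) := by rw [relIndex_eq_one.2 inf_le_right, mul_one]
    _ ≤ H.relIndex K := relIndex_le_of_le_right inf_le_left hHK

theorem relIndex_eq_card_of_surjective {H K : Subgroup G} {A : Type*} [Group A] (φ : K →* A)
    (hφ : Function.Surjective φ) (hker : ∀ x : K, φ x = 1 ↔ (x : G) ∈ H) :
    H.relIndex K = Nat.card A := by
  have hkerφ : φ.ker = H.subgroupOf K := by
    ext x
    rw [MonoidHom.mem_ker, mem_subgroupOf, hker]
  rw [relIndex, ← hkerφ, index_ker, MonoidHom.range_eq_top.2 hφ, card_top]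

end Subgroup

abbrev Subquotient {G : Type*} [Group G] (H : ℕ → Subgroup G) (i : ℕ) : Type _ :=
  H i ⧸ (H (i + 1)).subgroupOf (H i)

namespace Subquotient

variable {G : Type*} [Group G] {H : ℕ → Subgroup G} {p : ℕ}

theorem mk_eq_mk_iff {i : ℕ} {a b : H i} :
    (a : Subquotient H i) = b ↔ (a : G)⁻¹ * b ∈ H (i + 1) := by
  rw [QuotientGroup.eq, Subgroup.mem_subgroupOf]
  simp

section PowMap

variable (hpow : ∀ i, ∀ g ∈ H i, g ^ p ∈ H (i + 1))
  (hstep : ∀ i, ∀ a ∈ H i, ∀ b ∈ H i, a⁻¹ * b ∈ H (i + 1) ↔ (a ^ p)⁻¹ * b ^ p ∈ H (i + 2))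

def powMap (i : ℕ) : Subquotient H i → Subquotient H (i + 1) :=
  Quotient.lift
    (fun a : H i => ((⟨(a : G) ^ p, hpow i a a.2⟩ : H (i + 1)) : Subquotient H (i + 1)))
    fun a b hab => mk_eq_mk_iff.2 <| (hstep i a a.2 b b.2).1 <| mk_eq_mk_iff.1 (Quotient.sound hab)

theorem powMap_injective (i : ℕ) : Function.Injective (powMap hpow hstep i) := by
  intro x y
  induction x using QuotientGroup.induction_on with | H a =>
  induction y using QuotientGroup.induction_on with | H b =>
  exact fun hab => mk_eq_mk_iff.2 <| (hstep i a a.2 b b.2).2 <| mk_eq_mk_iff.1 hab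

end PowMap

theorem eventually_exists_inv_pow_mul_mem (hpow : ∀ i, ∀ g ∈ H i, g ^ p ∈ H (i + 1))
    (hstep : ∀ i, ∀ a ∈ H i, ∀ b ∈ H i, a⁻¹ * b ∈ H (i + 1) ↔ (a ^ p)⁻¹ * b ^ p ∈ H (i + 2))
    (B : ℕ) (hfin : ∀ i, (H (i + 1)).relIndex (H i) ≠ 0)
    (hB : ∀ i, (H (i + 1)).relIndex (H i) ≤ B) :
    ∀ᶠ i in atTop, ∀ h ∈ H (i + 1), ∃ g ∈ H i, (g ^ p)⁻¹ * h ∈ H (i + 2) := by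
  have : ∀ i, Finite (Subquotient H i) := fun i => Nat.finite_of_card_ne_zero (hfin i)
  filter_upwards [eventually_surjective_of_injective_of_card_le _ (powMap_injective hpow hstep)
    B hB] with i hsurj h hh
  obtain ⟨x, hx⟩ := hsurj ((⟨h, hh⟩ : H (i + 1)) : Subquotient H (i + 1))
  induction x using QuotientGroup.induction_on with | H a =>
  exact ⟨a, a.2, mk_eq_mk_iff.1 hx⟩

end Subquotient

namespace PowerFiltration

variable {G : Type*} [Group G] {K : ℕ → Subgroup G} {p : ℕ}

theorem inv_pow_mul_pow_mem_iff {N : Subgroup G} (hN : N.Normal) {a c : G}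
    (hac : (a * c) ^ p * (a ^ p * c ^ p)⁻¹ ∈ N) :
    (a ^ p)⁻¹ * (a * c) ^ p ∈ N ↔ c ^ p ∈ N := by
  have hconj := hN.conj_mem _ hac (a ^ p)⁻¹
  rw [inv_inv] at hconj
  have hsplit : (a ^ p)⁻¹ * (a * c) ^ p =
      (a ^ p)⁻¹ * ((a * c) ^ p * (a ^ p * c ^ p)⁻¹) * a ^ p * c ^ p := by
    group
  rw [hsplit, N.mul_mem_cancel_left hconj]

theorem inv_mul_mem_iff_inv_pow_mul_pow_mem (hnormal : ∀ i, (K i).Normal)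
    (hpow : ∀ i, ∀ g ∈ K i, g ^ p ∈ K (i + 1))
    (hhom : ∀ i, ∀ g ∈ K i, ∀ h ∈ K i, (g * h) ^ p * (g ^ p * h ^ p)⁻¹ ∈ K (i + 2))
    (hinj : ∀ i, ∀ g ∈ K i, g ^ p ∈ K (i + 2) → g ∈ K (i + 1))
    {i : ℕ} {a b : G} (ha : a ∈ K i) (hb : b ∈ K i) :
    a⁻¹ * b ∈ K (i + 1) ↔ (a ^ p)⁻¹ * b ^ p ∈ K (i + 2) := by
  have hc : a⁻¹ * b ∈ K i := mul_mem (inv_mem ha) hb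
  have hiff := inv_pow_mul_pow_mem_iff (hnormal (i + 2)) (hhom i a ha _ hc)
  rw [mul_inv_cancel_left] at hiff
  rw [hiff]
  exact ⟨hpow (i + 1) _, hinj i _ hc⟩

variable (Γ : Subgroup G)

theorem pow_mem_inf (hpow : ∀ i, ∀ g ∈ K i, g ^ p ∈ K (i + 1)) (i : ℕ) :
    ∀ g ∈ K i ⊓ Γ, g ^ p ∈ K (i + 1) ⊓ Γ :=
  fun _ hg => ⟨hpow i _ hg.1, pow_mem hg.2 p⟩

theorem powDefect_mem_inf
    (hhom : ∀ i, ∀ g ∈ K i, ∀ h ∈ K i, (g * h) ^ p * (g ^ p * h ^ p)⁻¹ ∈ K (i + 2)) (i : ℕ) :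
    ∀ g ∈ K i ⊓ Γ, ∀ h ∈ K i ⊓ Γ, (g * h) ^ p * (g ^ p * h ^ p)⁻¹ ∈ K (i + 2) ⊓ Γ :=
  fun g hg h hh => by
    rw [Subgroup.mem_inf] at hg hh ⊢
    exact ⟨hhom i g hg.1 h hh.1, mul_mem (pow_mem (mul_mem hg.2 hh.2) p)
      (inv_mem (mul_mem (pow_mem hg.2 p) (pow_mem hh.2 p)))⟩

theorem inv_mul_mem_inf_iff_inv_pow_mul_pow_mem_inf (hnormal : ∀ i, (K i).Normal)
    (hpow : ∀ i, ∀ g ∈ K i, g ^ p ∈ K (i + 1))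
    (hhom : ∀ i, ∀ g ∈ K i, ∀ h ∈ K i, (g * h) ^ p * (g ^ p * h ^ p)⁻¹ ∈ K (i + 2))
    (hinj : ∀ i, ∀ g ∈ K i, g ^ p ∈ K (i + 2) → g ∈ K (i + 1)) (i : ℕ) :
    ∀ a ∈ K i ⊓ Γ, ∀ b ∈ K i ⊓ Γ,
      a⁻¹ * b ∈ K (i + 1) ⊓ Γ ↔ (a ^ p)⁻¹ * b ^ p ∈ K (i + 2) ⊓ Γ := by
  intro a ha b hb
  rw [Subgroup.mem_inf] at ha hb
  rw [Subgroup.mem_inf, Subgroup.mem_inf, and_iff_left (mul_mem (inv_mem ha.2) hb.2),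
    and_iff_left (mul_mem (inv_mem (pow_mem ha.2 p)) (pow_mem hb.2 p))]
  exact inv_mul_mem_iff_inv_pow_mul_pow_mem hnormal hpow hhom hinj ha.1 hb.1

theorem mem_inf_of_pow_mem_inf (hinj : ∀ i, ∀ g ∈ K i, g ^ p ∈ K (i + 2) → g ∈ K (i + 1))
    (i : ℕ) : ∀ g ∈ K i ⊓ Γ, g ^ p ∈ K (i + 2) ⊓ Γ → g ∈ K (i + 1) ⊓ Γ :=
  fun _ hg hgp => ⟨hinj i _ hg.1 hgp.1, hg.2⟩

end PowerFiltration

theorem stmt3_general (p d : ℕ) (hp : p.Prime)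
    (G : Type*) [Group G]
    (GN : ℕ → Subgroup G)
    (hnormal : ∀ i, (GN i).Normal)
    -- the p-th power map induces isomorphisms `G(i)/G(i+1) → G(i+1)/G(i+2)`
    (hpow : ∀ i, ∀ g ∈ GN i, g ^ p ∈ GN (i + 1))
    (hhom : ∀ i, ∀ g ∈ GN i, ∀ h ∈ GN i, (g * h) ^ p * (g ^ p * h ^ p)⁻¹ ∈ GN (i + 2))
    (hinj : ∀ i, ∀ g ∈ GN i, g ^ p ∈ GN (i + 2) → g ∈ GN (i + 1))
    -- each quotient `G(i)/G(i+1)` is isomorphic to `(ℤ/pℤ)^d`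
    (hquot : ∀ i, ∃ φ : ↥(GN i) →* (Fin d → Multiplicative (ZMod p)),
      Function.Surjective φ ∧ ∀ x : ↥(GN i), φ x = 1 ↔ (x : G) ∈ GN (i + 1))
    (Γ : Subgroup G) :
    (∃ N : ℕ, ∀ i ≥ N,
      (∀ g ∈ GN i ⊓ Γ, g ^ p ∈ GN (i + 1) ⊓ Γ) ∧
      (∀ g ∈ GN i ⊓ Γ, ∀ h ∈ GN i ⊓ Γ,
        (g * h) ^ p * (g ^ p * h ^ p)⁻¹ ∈ GN (i + 2) ⊓ Γ) ∧
      (∀ g ∈ GN i ⊓ Γ, g ^ p ∈ GN (i + 2) ⊓ Γ → g ∈ GN (i + 1) ⊓ Γ)) ∧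
    (∃ N : ℕ, ∀ i ≥ N,
      (∀ g ∈ GN i ⊓ Γ, g ^ p ∈ GN (i + 1) ⊓ Γ) ∧
      (∀ g ∈ GN i ⊓ Γ, ∀ h ∈ GN i ⊓ Γ,
        (g * h) ^ p * (g ^ p * h ^ p)⁻¹ ∈ GN (i + 2) ⊓ Γ) ∧
      (∀ g ∈ GN i ⊓ Γ, g ^ p ∈ GN (i + 2) ⊓ Γ → g ∈ GN (i + 1) ⊓ Γ) ∧
      (∀ h ∈ GN (i + 1) ⊓ Γ, ∃ g ∈ GN i ⊓ Γ, (g ^ p)⁻¹ * h ∈ GN (i + 2) ⊓ Γ)) := by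
  have : NeZero p := ⟨hp.ne_zero⟩
  have hindex : ∀ i, (GN (i + 1)).relIndex (GN i) = Nat.card (Fin d → Multiplicative (ZMod p)) :=
    fun i => by
      obtain ⟨φ, hφ, hker⟩ := hquot i
      exact Subgroup.relIndex_eq_card_of_surjective φ hφ hker
  have hfin : ∀ i, (GN (i + 1)).relIndex (GN i) ≠ 0 := fun i =>
    hindex i ▸ Nat.card_ne_zero.2 ⟨inferInstance, inferInstance⟩
  have hpowΓ := PowerFiltration.pow_mem_inf Γ hpow
  have hhomΓ := PowerFiltration.powDefect_mem_inf Γ hhom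
  have hinjΓ := PowerFiltration.mem_inf_of_pow_mem_inf Γ hinj
  obtain ⟨N, hN⟩ := eventually_atTop.1 <| Subquotient.eventually_exists_inv_pow_mul_mem hpowΓ
    (PowerFiltration.inv_mul_mem_inf_iff_inv_pow_mul_pow_mem_inf Γ hnormal hpow hhom hinj) _
    (fun i => Subgroup.relIndex_inter_ne_zero (hfin i) Γ)
    (fun i => (Subgroup.relIndex_inf_inf_le Γ (hfin i)).trans (hindex i).le)
  exact ⟨⟨0, fun i _ => ⟨hpowΓ i, hhomΓ i, hinjΓ i⟩⟩,
    ⟨N, fun i hi => ⟨hpowΓ i, hhomΓ i, hinjΓ i, hN i hi⟩⟩⟩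

/-- if `G` is a profinite group with a descending chain of open normal subgroups
`G(i)` on which the `p`-th power map induces isomorphisms `G(i)/G(i+1) → G(i+1)/G(i+2)`
with each quotient `≅ (ℤ/pℤ)^d`, and `Γ ≤ G` is closed with `Γ(i) = G(i) ∩ Γ`, then for all
sufficiently large `i` the `p`-th power map induces an injective homomorphism
`Γ(i)/Γ(i+1) → Γ(i+1)/Γ(i+2)`, and these maps are isomorphisms for `i` sufficiently large.
Induced maps between the subquotients are encoded elementwise. -/
theorem stmt3 (p d : ℕ) (hp : p.Prime) (hd : 1 ≤ d)
    (G : Type*) [Group G] [TopologicalSpace G] [IsTopologicalGroup G] [CompactSpace G]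
    [TotallyDisconnectedSpace G]
    (GN : ℕ → Subgroup G)
    (hopen : ∀ i, IsOpen (GN i : Set G)) (hnormal : ∀ i, (GN i).Normal)
    (hdesc : ∀ i, GN (i + 1) ≤ GN i)
    -- the p-th power map induces isomorphisms `G(i)/G(i+1) → G(i+1)/G(i+2)`
    (hpow : ∀ i, ∀ g ∈ GN i, g ^ p ∈ GN (i + 1))
    (hhom : ∀ i, ∀ g ∈ GN i, ∀ h ∈ GN i, (g * h) ^ p * (g ^ p * h ^ p)⁻¹ ∈ GN (i + 2))
    (hinj : ∀ i, ∀ g ∈ GN i, g ^ p ∈ GN (i + 2) → g ∈ GN (i + 1))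
    (hsurj : ∀ i, ∀ h ∈ GN (i + 1), ∃ g ∈ GN i, (g ^ p)⁻¹ * h ∈ GN (i + 2))
    -- each quotient `G(i)/G(i+1)` is isomorphic to `(ℤ/pℤ)^d`
    (hquot : ∀ i, ∃ φ : ↥(GN i) →* (Fin d → Multiplicative (ZMod p)),
      Function.Surjective φ ∧ ∀ x : ↥(GN i), φ x = 1 ↔ (x : G) ∈ GN (i + 1))
    (Γ : Subgroup G) (hΓ : IsClosed (Γ : Set G)) :
    (∃ N : ℕ, ∀ i ≥ N,
      (∀ g ∈ GN i ⊓ Γ, g ^ p ∈ GN (i + 1) ⊓ Γ) ∧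
      (∀ g ∈ GN i ⊓ Γ, ∀ h ∈ GN i ⊓ Γ,
        (g * h) ^ p * (g ^ p * h ^ p)⁻¹ ∈ GN (i + 2) ⊓ Γ) ∧
      (∀ g ∈ GN i ⊓ Γ, g ^ p ∈ GN (i + 2) ⊓ Γ → g ∈ GN (i + 1) ⊓ Γ)) ∧
    (∃ N : ℕ, ∀ i ≥ N,
      (∀ g ∈ GN i ⊓ Γ, g ^ p ∈ GN (i + 1) ⊓ Γ) ∧
      (∀ g ∈ GN i ⊓ Γ, ∀ h ∈ GN i ⊓ Γ,
        (g * h) ^ p * (g ^ p * h ^ p)⁻¹ ∈ GN (i + 2) ⊓ Γ) ∧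
      (∀ g ∈ GN i ⊓ Γ, g ^ p ∈ GN (i + 2) ⊓ Γ → g ∈ GN (i + 1) ⊓ Γ) ∧
      (∀ h ∈ GN (i + 1) ⊓ Γ, ∃ g ∈ GN i ⊓ Γ, (g ^ p)⁻¹ * h ∈ GN (i + 2) ⊓ Γ)) :=
  stmt3_general p d hp G GN hnormal hpow hhom hinj hquot Γ
end
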